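/- arXiv:2103.07116 — 5 statements merged into one kernel-verified Lean document; each statement's English description precedes it below -/
import Mathlib

section
/- Suppose two Manhattan-optimal grid paths p1 (from S1 to G1, over time interval [t0, t0+L1]) and p2 (from S2 to G2, over [t0, t0+L2]) both move weakly in the same direction along each axis, i.e., (S1.x−G1.x)(S2.x−G2.x) ≥ 0 and (S1.y−G1.y)(S2.y−G2.y) ≥ 0, and they start at the same timestep t0. If p1 and p2 conflict at some common cell at some common timestep, then for every cell c in the intersection of the S1-G1 rectangle and the S2-G2 rectangle, the Manhattan distance from S1 to c equals the Manhattan distance from S2 to c. -/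
/-- A step on the 4-neighbor grid: move by 1 in exactly one coordinate, or wait. -/
def GridStep (a b : ℤ × ℤ) : Prop := |b.1 - a.1| + |b.2 - a.2| ≤ 1

/-- Membership in the axis-aligned rectangle with diagonal corners `S` and `G`. -/
def InRect (S G c : ℤ × ℤ) : Prop :=
  min S.1 G.1 ≤ c.1 ∧ c.1 ≤ max S.1 G.1 ∧ min S.2 G.2 ≤ c.2 ∧ c.2 ≤ max S.2 G.2

/-!
The meeting cell `v = p₁ t = p₂ t` lies at distance exactly `t` from both starts, since a
Manhattan-optimal path never wastes a step, and for the same reason it lies in both rectangles.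
On each axis, when the two segments point the same way, `x ↦ |x - s₁| - |x - s₂|` is constant on
the intersection of the two segments; so the difference of the distances to the two starts is the
same for every cell of the intersection of the rectangles as for `v`, namely `0`.
-/

def gridDist (a b : ℤ × ℤ) : ℤ := |b.1 - a.1| + |b.2 - a.2|

theorem gridDist_comm (a b : ℤ × ℤ) : gridDist a b = gridDist b a := by
  simp only [gridDist, abs_sub_comm]

theorem gridDist_triangle (a b c : ℤ × ℤ) : gridDist a c ≤ gridDist a b + gridDist b c := by
  have h₁ := abs_sub_le c.1 b.1 a.1
  have h₂ := abs_sub_le c.2 b.2 a.2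
  simp only [gridDist]
  linarith

theorem inRect_iff (S G c : ℤ × ℤ) :
    InRect S G c ↔ c.1 ∈ Set.uIcc S.1 G.1 ∧ c.2 ∈ Set.uIcc S.2 G.2 := by
  simp only [InRect, Set.uIcc, Set.mem_Icc, and_assoc]

theorem inRect_of_gridDist_add_eq {S G v : ℤ × ℤ}
    (h : gridDist S v + gridDist v G = gridDist S G) : InRect S G v := by
  simp only [InRect, gridDist, abs_eq_max_neg] at h ⊢
  omega

theorem gridDist_le_of_gridStep {L : ℕ} {p : ℕ → ℤ × ℤ}
    (hstep : ∀ t < L, GridStep (p t) (p (t + 1))) {t u : ℕ} (htu : t ≤ u) (hu : u ≤ L) :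
    gridDist (p t) (p u) ≤ (u : ℤ) - t := by
  induction u, htu using Nat.le_induction with
  | base => simp [gridDist]
  | succ u htu ih =>
    have hlast : gridDist (p u) (p (u + 1)) ≤ 1 := hstep u (by omega)
    have := gridDist_triangle (p t) (p u) (p (u + 1))
    push_cast
    linarith [ih (by omega)]

theorem gridDist_eq_of_optimal {L : ℕ} {p : ℕ → ℤ × ℤ}
    (hstep : ∀ t < L, GridStep (p t) (p (t + 1))) (hopt : gridDist (p 0) (p L) = L)
    {t : ℕ} (ht : t ≤ L) :
    gridDist (p 0) (p t) = t ∧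
      gridDist (p 0) (p t) + gridDist (p t) (p L) = gridDist (p 0) (p L) := by
  have hstart := gridDist_le_of_gridStep hstep (Nat.zero_le t) ht
  have hgoal := gridDist_le_of_gridStep hstep ht le_rfl
  have := gridDist_triangle (p 0) (p t) (p L)
  push_cast at hstart
  constructor <;> linarith

theorem abs_sub_sub_abs_sub_eq_of_mem_uIcc_inter {s₁ g₁ s₂ g₂ x y : ℤ}
    (hdir : 0 ≤ (s₁ - g₁) * (s₂ - g₂)) (hx₁ : x ∈ Set.uIcc s₁ g₁) (hx₂ : x ∈ Set.uIcc s₂ g₂)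
    (hy₁ : y ∈ Set.uIcc s₁ g₁) (hy₂ : y ∈ Set.uIcc s₂ g₂) :
    |x - s₁| - |x - s₂| = |y - s₁| - |y - s₂| := by
  rw [Set.mem_uIcc] at hx₁ hx₂ hy₁ hy₂
  simp only [abs_eq_max_neg]
  rcases mul_nonneg_iff.mp hdir with ⟨h₁, h₂⟩ | ⟨h₁, h₂⟩ <;> omega

theorem rectangle_conflict_equal_distances_general
    (L1 L2 : ℕ) (S1 G1 S2 G2 : ℤ × ℤ) (p1 p2 : ℕ → ℤ × ℤ)
    (hS1 : p1 0 = S1) (hG1 : p1 L1 = G1)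
    (hS2 : p2 0 = S2) (hG2 : p2 L2 = G2)
    (hstep1 : ∀ t < L1, GridStep (p1 t) (p1 (t + 1)))
    (hstep2 : ∀ t < L2, GridStep (p2 t) (p2 (t + 1)))
    (hopt1 : (L1 : ℤ) = |S1.1 - G1.1| + |S1.2 - G1.2|)
    (hopt2 : (L2 : ℤ) = |S2.1 - G2.1| + |S2.2 - G2.2|)
    (hdirx : (S1.1 - G1.1) * (S2.1 - G2.1) ≥ 0)
    (hdiry : (S1.2 - G1.2) * (S2.2 - G2.2) ≥ 0)
    (hconf : ∃ t, t ≤ L1 ∧ t ≤ L2 ∧ p1 t = p2 t) :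
    ∀ c : ℤ × ℤ, InRect S1 G1 c → InRect S2 G2 c →
      |c.1 - S1.1| + |c.2 - S1.2| = |c.1 - S2.1| + |c.2 - S2.2| := by
  intro c hc₁ hc₂
  obtain ⟨t, ht₁, ht₂, hmeet⟩ := hconf
  subst hS1 hG1 hS2 hG2
  obtain ⟨hd₁, hsum₁⟩ :=
    gridDist_eq_of_optimal hstep1 (by rw [gridDist_comm]; exact hopt1.symm) ht₁
  obtain ⟨hd₂, hsum₂⟩ :=
    gridDist_eq_of_optimal hstep2 (by rw [gridDist_comm]; exact hopt2.symm) ht₂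
  have hv₁ := inRect_of_gridDist_add_eq hsum₁
  have hv₂ := inRect_of_gridDist_add_eq hsum₂
  rw [hmeet] at hd₁ hv₁
  rw [inRect_iff] at hc₁ hc₂ hv₁ hv₂
  have hx := abs_sub_sub_abs_sub_eq_of_mem_uIcc_inter hdirx hc₁.1 hc₂.1 hv₁.1 hv₂.1
  have hy := abs_sub_sub_abs_sub_eq_of_mem_uIcc_inter hdiry hc₁.2 hc₂.2 hv₁.2 hv₂.2
  simp only [gridDist] at hd₁ hd₂
  linarith

/-- If two Manhattan-optimal grid paths starting at the same timestep move weakly in the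
same direction along each axis and conflict at some common cell at some common timestep,
then every cell in the intersection of the `S1`-`G1` and `S2`-`G2` rectangles is at equal
Manhattan distance from both starts. -/
theorem rectangle_conflict_equal_distances
    (t0 : ℤ) (L1 L2 : ℕ) (S1 G1 S2 G2 : ℤ × ℤ) (p1 p2 : ℕ → ℤ × ℤ)
    (hS1 : p1 0 = S1) (hG1 : p1 L1 = G1)
    (hS2 : p2 0 = S2) (hG2 : p2 L2 = G2)
    (hstep1 : ∀ t < L1, GridStep (p1 t) (p1 (t + 1)))
    (hstep2 : ∀ t < L2, GridStep (p2 t) (p2 (t + 1)))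
    (hopt1 : (L1 : ℤ) = |S1.1 - G1.1| + |S1.2 - G1.2|)
    (hopt2 : (L2 : ℤ) = |S2.1 - G2.1| + |S2.2 - G2.2|)
    (hdirx : (S1.1 - G1.1) * (S2.1 - G2.1) ≥ 0)
    (hdiry : (S1.2 - G1.2) * (S2.2 - G2.2) ≥ 0)
    (hconf : ∃ t, t ≤ L1 ∧ t ≤ L2 ∧ p1 t = p2 t) :
    ∀ c : ℤ × ℤ, InRect S1 G1 c → InRect S2 G2 c →
      |c.1 - S1.1| + |c.2 - S1.2| = |c.1 - S2.1| + |c.2 - S2.2| :=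
  rectangle_conflict_equal_distances_general L1 L2 S1 G1 S2 G2 p1 p2 hS1 hG1 hS2 hG2 hstep1 hstep2
    hopt1 hopt2 hdirx hdiry hconf
end

section
/- Let two timed monotone lattice paths p1 and p2 in ℤ² both move only with steps (+1,0) or (0,+1), one step per timestep, with equal Manhattan distance from their respective start cells to any common rectangle cell. Suppose p1 goes from a cell on the left border {0}×[0,b] of the rectangle [0,a]×[0,b] to a cell on the right border {a}×[0,b], and p2 goes from a cell on the bottom border [0,a]×{0} to a cell on the top border [0,a]×{b}, and at every timestep t each path is at a cell whose Manhattan distance from (0,0) equals t (both paths are synchronized this way). Then p1 and p2 visit a common cell at the same timestep. -/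
/-!
Let `t₀` be the later of the two start times and `t₁` the earlier of the two end times. Since
the paths only move right or up, at `t₀` the horizontal path is still weakly left of the vertical
one, and at `t₁` it is weakly right of it. The horizontal gap `x₁ - x₂` grows by at most one per
timestep, so it vanishes at some `t ∈ [t₀, t₁]`; both cells lie on the anti-diagonal `x + y = t`,
hence they coincide.
-/

theorem Int.exists_eq_of_le_add_one {g : ℤ → ℤ} {a b c : ℤ} (hab : a ≤ b)
    (hg : ∀ t, a ≤ t → t < b → g (t + 1) ≤ g t + 1) (ha : g a ≤ c) (hb : c ≤ g b) :
    ∃ t, a ≤ t ∧ t ≤ b ∧ g t = c := by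
  induction b, hab using Int.leInduction with
  | base => exact ⟨a, le_rfl, le_rfl, le_antisymm ha hb⟩
  | succ b hab ih =>
    by_cases hcb : c ≤ g b
    · obtain ⟨t, hat, htb, hgt⟩ := ih (fun t h₁ h₂ => hg t h₁ (by omega)) hcb
      exact ⟨t, hat, by omega, hgt⟩
    · have := hg b hab (by omega)
      exact ⟨b + 1, by omega, le_rfl, by omega⟩

def IsMonotoneLatticePath (p : ℤ → ℤ × ℤ) (s e : ℤ) : Prop :=
  ∀ t, s ≤ t → t < e → p (t + 1) = ((p t).1 + 1, (p t).2) ∨ p (t + 1) = ((p t).1, (p t).2 + 1)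

namespace IsMonotoneLatticePath

variable {p : ℤ → ℤ × ℤ} {s e t : ℤ}

theorem le_add_one (hp : IsMonotoneLatticePath p s e) (hst : s ≤ t) (hte : t < e) :
    p t ≤ p (t + 1) := by
  rcases hp t hst hte with h | h <;> simp [h, Prod.le_def]

theorem fst_add_one_le (hp : IsMonotoneLatticePath p s e) (hst : s ≤ t) (hte : t < e) :
    (p (t + 1)).1 ≤ (p t).1 + 1 := by
  rcases hp t hst hte with h | h <;> simp [h]

theorem monotoneOn (hp : IsMonotoneLatticePath p s e) : MonotoneOn p (Set.Icc s e) :=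
  monotoneOn_of_le_add_one Set.ordConnected_Icc fun t _ ht ht' => hp.le_add_one ht.1 (by
    simp only [Set.mem_Icc] at ht'; omega)

theorem mono (hp : IsMonotoneLatticePath p s e) {u : ℤ} (hst : s ≤ t) (htu : t ≤ u)
    (hue : u ≤ e) : p t ≤ p u :=
  hp.monotoneOn ⟨hst, by omega⟩ ⟨by omega, hue⟩ htu

end IsMonotoneLatticePath

def IsSynchronized (p : ℤ → ℤ × ℤ) (s e : ℤ) : Prop :=
  ∀ t, s ≤ t → t ≤ e → (p t).1 + (p t).2 = t

section TwoPaths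

variable {p₁ p₂ : ℤ → ℤ × ℤ} {s₁ e₁ s₂ e₂ : ℤ}

theorem fst_sub_fst_add_one_le (hp₁ : IsMonotoneLatticePath p₁ s₁ e₁)
    (hp₂ : IsMonotoneLatticePath p₂ s₂ e₂) {t : ℤ} (h₁ : s₁ ≤ t ∧ t < e₁) (h₂ : s₂ ≤ t ∧ t < e₂) :
    (p₁ (t + 1)).1 - (p₂ (t + 1)).1 ≤ (p₁ t).1 - (p₂ t).1 + 1 := by
  have := hp₁.fst_add_one_le h₁.1 h₁.2
  have := (Prod.le_def.1 (hp₂.le_add_one h₂.1 h₂.2)).1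
  omega

theorem fst_le_fst_at_max_start (hp₁ : IsMonotoneLatticePath p₁ s₁ e₁)
    (hp₂ : IsMonotoneLatticePath p₂ s₂ e₂) (hσ₁ : IsSynchronized p₁ s₁ e₁)
    (hσ₂ : IsSynchronized p₂ s₂ e₂) (he₁ : max s₁ s₂ ≤ e₁) (he₂ : max s₁ s₂ ≤ e₂)
    (h₁ : (p₁ s₁).1 = 0 ∧ 0 ≤ (p₁ s₁).2) (h₂ : (p₂ s₂).2 = 0 ∧ 0 ≤ (p₂ s₂).1) :
    (p₁ (max s₁ s₂)).1 ≤ (p₂ (max s₁ s₂)).1 := by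
  rcases max_choice s₁ s₂ with h | h <;> rw [h] at he₁ he₂ ⊢
  · have := Prod.le_def.1 (hp₂.mono le_rfl (by omega : s₂ ≤ s₁) he₂)
    omega
  · have := Prod.le_def.1 (hp₁.mono le_rfl (by omega : s₁ ≤ s₂) he₁)
    have := hσ₁ s₂ (by omega) he₁
    have := hσ₂ s₂ le_rfl he₂
    omega

theorem fst_le_fst_at_min_end (hp₁ : IsMonotoneLatticePath p₁ s₁ e₁)
    (hp₂ : IsMonotoneLatticePath p₂ s₂ e₂) (hσ₁ : IsSynchronized p₁ s₁ e₁)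
    (hσ₂ : IsSynchronized p₂ s₂ e₂) (hs₁ : s₁ ≤ min e₁ e₂) (hs₂ : s₂ ≤ min e₁ e₂) {a b : ℤ}
    (h₁ : (p₁ e₁).1 = a ∧ (p₁ e₁).2 ≤ b) (h₂ : (p₂ e₂).2 = b ∧ (p₂ e₂).1 ≤ a) :
    (p₂ (min e₁ e₂)).1 ≤ (p₁ (min e₁ e₂)).1 := by
  rcases min_choice e₁ e₂ with h | h <;> rw [h] at hs₁ hs₂ ⊢
  · have := Prod.le_def.1 (hp₂.mono hs₂ (by omega : e₁ ≤ e₂) le_rfl)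
    omega
  · have := Prod.le_def.1 (hp₁.mono hs₁ (by omega : e₂ ≤ e₁) le_rfl)
    have := hσ₁ e₂ hs₁ (by omega)
    have := hσ₂ e₂ hs₂ le_rfl
    omega

end TwoPaths

theorem crossing_paths_conflict_general
    (a b : ℤ)
    (s1 e1 s2 e2 : ℤ) (p1 p2 : ℤ → ℤ × ℤ)
    (hs1 : s1 ≤ e1) (hs2 : s2 ≤ e2)
    (hstep1 : ∀ t, s1 ≤ t → t < e1 →
      p1 (t + 1) = ((p1 t).1 + 1, (p1 t).2) ∨ p1 (t + 1) = ((p1 t).1, (p1 t).2 + 1))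
    (hstep2 : ∀ t, s2 ≤ t → t < e2 →
      p2 (t + 1) = ((p2 t).1 + 1, (p2 t).2) ∨ p2 (t + 1) = ((p2 t).1, (p2 t).2 + 1))
    (hsync1 : ∀ t, s1 ≤ t → t ≤ e1 → (p1 t).1 + (p1 t).2 = t)
    (hsync2 : ∀ t, s2 ≤ t → t ≤ e2 → (p2 t).1 + (p2 t).2 = t)
    (hstart1 : (p1 s1).1 = 0 ∧ 0 ≤ (p1 s1).2 ∧ (p1 s1).2 ≤ b)
    (hend1 : (p1 e1).1 = a ∧ 0 ≤ (p1 e1).2 ∧ (p1 e1).2 ≤ b)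
    (hstart2 : (p2 s2).2 = 0 ∧ 0 ≤ (p2 s2).1 ∧ (p2 s2).1 ≤ a)
    (hend2 : (p2 e2).2 = b ∧ 0 ≤ (p2 e2).1 ∧ (p2 e2).1 ≤ a) :
    ∃ t, s1 ≤ t ∧ t ≤ e1 ∧ s2 ≤ t ∧ t ≤ e2 ∧ p1 t = p2 t := by
  have hp1 : IsMonotoneLatticePath p1 s1 e1 := hstep1
  have hp2 : IsMonotoneLatticePath p2 s2 e2 := hstep2
  have hsum1_s := hsync1 s1 le_rfl hs1
  have hsum1_e := hsync1 e1 hs1 le_rfl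
  have hsum2_s := hsync2 s2 le_rfl hs2
  have hsum2_e := hsync2 e2 hs2 le_rfl
  have ht₀₁ : max s1 s2 ≤ min e1 e2 := by omega
  obtain ⟨t, h₀, h₁, hgap⟩ := Int.exists_eq_of_le_add_one (g := fun t => (p1 t).1 - (p2 t).1)
    ht₀₁ (fun t h₀ h₁ => fst_sub_fst_add_one_le hp1 hp2 ⟨by omega, by omega⟩ ⟨by omega, by omega⟩)
    (sub_nonpos.2 (fst_le_fst_at_max_start hp1 hp2 hsync1 hsync2 (by omega) (by omega)
      ⟨hstart1.1, hstart1.2.1⟩ ⟨hstart2.1, hstart2.2.1⟩))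
    (sub_nonneg.2 (fst_le_fst_at_min_end hp1 hp2 hsync1 hsync2 (by omega) (by omega)
      ⟨hend1.1, hend1.2.2⟩ ⟨hend2.1, hend2.2.2⟩))
  have hsum1_t := hsync1 t (by omega) (by omega)
  have hsum2_t := hsync2 t (by omega) (by omega)
  exact ⟨t, by omega, by omega, by omega, by omega, Prod.ext (by omega) (by omega)⟩

/-- Two synchronized timed monotone lattice paths (steps `(+1,0)` or `(0,+1)`, one per
timestep, at timestep `t` on the anti-diagonal `x + y = t`), one crossing the rectangle
`[0,a] × [0,b]` from its left border to its right border and the other from its bottom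
border to its top border, must visit a common cell at the same timestep. -/
theorem crossing_paths_conflict
    (a b : ℤ) (ha : 0 ≤ a) (hb : 0 ≤ b)
    (s1 e1 s2 e2 : ℤ) (p1 p2 : ℤ → ℤ × ℤ)
    (hs1 : s1 ≤ e1) (hs2 : s2 ≤ e2)
    (hstep1 : ∀ t, s1 ≤ t → t < e1 →
      p1 (t + 1) = ((p1 t).1 + 1, (p1 t).2) ∨ p1 (t + 1) = ((p1 t).1, (p1 t).2 + 1))
    (hstep2 : ∀ t, s2 ≤ t → t < e2 →
      p2 (t + 1) = ((p2 t).1 + 1, (p2 t).2) ∨ p2 (t + 1) = ((p2 t).1, (p2 t).2 + 1))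
    (hsync1 : ∀ t, s1 ≤ t → t ≤ e1 → (p1 t).1 + (p1 t).2 = t)
    (hsync2 : ∀ t, s2 ≤ t → t ≤ e2 → (p2 t).1 + (p2 t).2 = t)
    (hstart1 : (p1 s1).1 = 0 ∧ 0 ≤ (p1 s1).2 ∧ (p1 s1).2 ≤ b)
    (hend1 : (p1 e1).1 = a ∧ 0 ≤ (p1 e1).2 ∧ (p1 e1).2 ≤ b)
    (hstart2 : (p2 s2).2 = 0 ∧ 0 ≤ (p2 s2).1 ∧ (p2 s2).1 ≤ a)
    (hend2 : (p2 e2).2 = b ∧ 0 ≤ (p2 e2).1 ∧ (p2 e2).1 ≤ a) :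
    ∃ t, s1 ≤ t ∧ t ≤ e1 ∧ s2 ≤ t ∧ t ≤ e2 ∧ p1 t = p2 t :=
  crossing_paths_conflict_general a b s1 e1 s2 e2 p1 p2 hs1 hs2 hstep1 hstep2 hsync1 hsync2 hstart1
    hend1 hstart2 hend2
end

section
/- Let N be a CT node in CBS with constraint sets C₁ and C₂ added to its two children, where C₁ constrains only agent a₁ and C₂ constrains only agent a₂, and suppose C₁ and C₂ are mutually disjunctive for N: every pair of paths (p₁ for a₁, p₂ for a₂) consistent with N such that p₁ violates some constraint in C₁ and p₂ violates some constraint in C₂ is in conflict. Then every conflict-free solution consistent with N is consistent with at least one of the two children. -/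
/-- A path `p` (of agent `i`) is consistent with a constraint set `CS` if it violates
none of the constraints of `CS` that constrain agent `i`. -/
def Consistent {ι Path Con : Type*} (agentOf : Con → ι) (Violates : Path → Con → Prop)
    (i : ι) (p : Path) (CS : Set Con) : Prop :=
  ∀ c ∈ CS, agentOf c = i → ¬ Violates p c

/-
If the conflict-free solution has `sol a₁` violating some constraint of `C₁`, then `sol a₂`
cannot violate any constraint of `C₂`: mutual disjunctiveness would make the two paths conflict.
Since `C₂` constrains only `a₂`, the solution is then consistent with the second child;
otherwise it is consistent with the first.
-/

section

variable {ι Path Con : Type*} (agentOf : Con → ι) (Violates : Path → Con → Prop)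

theorem consistent_union_iff {i : ι} {p : Path} {S T : Set Con} :
    Consistent agentOf Violates i p (S ∪ T) ↔
      Consistent agentOf Violates i p S ∧ Consistent agentOf Violates i p T := by
  simp only [Consistent, Set.mem_union, or_imp, forall_and]

variable {agentOf Violates}

theorem consistent_union_of_forall_agentOf_eq {a : ι} {sol : ι → Path} {N C : Set Con}
    (hC : ∀ c ∈ C, agentOf c = a) (hN : ∀ i, Consistent agentOf Violates i (sol i) N)
    (hsol : ¬ ∃ c ∈ C, Violates (sol a) c) :
    ∀ i, Consistent agentOf Violates i (sol i) (N ∪ C) := by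
  intro i
  refine (consistent_union_iff agentOf Violates).2 ⟨hN i, fun c hc hi hv => ?_⟩
  rw [hC c hc] at hi
  subst hi
  exact hsol ⟨c, hc, hv⟩

end

/-- If the constraint sets `C₁` (constraining only agent `a₁`) and `C₂` (constraining
only agent `a₂`) added to the two children of CT node `N` are mutually disjunctive for
`N`, then every conflict-free solution consistent with `N` is consistent with at least
one of the two children. -/
theorem mutually_disjunctive_constraints_complete
    {ι Path Con : Type*} (agentOf : Con → ι) (Violates : Path → Con → Prop)
    (Conflict : Path → Path → Prop)
    (a₁ a₂ : ι) (hne : a₁ ≠ a₂)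
    (N C₁ C₂ : Set Con)
    (hC₁ : ∀ c ∈ C₁, agentOf c = a₁)
    (hC₂ : ∀ c ∈ C₂, agentOf c = a₂)
    (hdisj : ∀ p₁ p₂ : Path,
      Consistent agentOf Violates a₁ p₁ N → Consistent agentOf Violates a₂ p₂ N →
      (∃ c ∈ C₁, Violates p₁ c) → (∃ c ∈ C₂, Violates p₂ c) → Conflict p₁ p₂) :
    ∀ sol : ι → Path,
      (∀ i, Consistent agentOf Violates i (sol i) N) →
      (∀ i j, i ≠ j → ¬ Conflict (sol i) (sol j)) →
      (∀ i, Consistent agentOf Violates i (sol i) (N ∪ C₁)) ∨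
      (∀ i, Consistent agentOf Violates i (sol i) (N ∪ C₂)) := by
  intro sol hN hcf
  by_cases h₁ : ∃ c ∈ C₁, Violates (sol a₁) c
  · right
    refine consistent_union_of_forall_agentOf_eq hC₂ hN fun h₂ => ?_
    exact hcf a₁ a₂ hne (hdisj _ _ (hN a₁) (hN a₂) h₁ h₂)
  · exact .inl (consistent_union_of_forall_agentOf_eq hC₁ hN h₁)
end

section
/- Let p1 be a monotone lattice path (steps (+1,0) or (0,+1)) visiting, at each timestep t, a cell (x,y) with x+y=t, that enters the rectangle [0,a]×[0,b] through its left border and exits through its right border; let p2 be such a path entering through the bottom border and exiting through the top border, synchronized the same way. Then the cell where they meet (which exists) lies inside the rectangle [0,a]×[0,b]. -/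
/-!
While both paths are alive, the horizontal distance `(p₁ t).1 - (p₂ t).1` increases by at most
one per timestep, since `p₁` moves right by at most one and `p₂` never moves left. At the later
of the two entry times it is `≤ 0` (either `p₁` is on the left border or `p₂` on the bottom one,
and both cells lie on the same antidiagonal), and at the earlier exit time it is `≥ 0`, so it
vanishes at some timestep, where the synchronization forces the two cells to coincide. The
meeting cell lies in the rectangle because a monotone path with both endpoints in a box stays
in it.
-/

open Set

def IsLatticeStep (u v : ℤ × ℤ) : Prop :=
  v = (u.1 + 1, u.2) ∨ v = (u.1, u.2 + 1)

namespace IsLatticeStep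

variable {u v : ℤ × ℤ}

lemma le (h : IsLatticeStep u v) : u ≤ v := by
  rcases h with rfl | rfl <;> simp [Prod.le_def]

lemma fst_le_add_one (h : IsLatticeStep u v) : v.1 ≤ u.1 + 1 := by
  rcases h with rfl | rfl <;> simp

end IsLatticeStep

lemma Int.exists_eq_of_le_add_one_s10 {f : ℤ → ℤ} {m n c : ℤ} (hmn : m ≤ n)
    (hf : ∀ t, m ≤ t → t < n → f (t + 1) ≤ f t + 1) (hm : f m ≤ c) (hn : c ≤ f n) :
    ∃ t ∈ Icc m n, f t = c := by
  induction n, hmn using Int.leInduction with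
  | base => exact ⟨m, left_mem_Icc.2 le_rfl, le_antisymm hm hn⟩
  | succ n hmn ih =>
    by_cases hcn : c ≤ f n
    · obtain ⟨t, ⟨hmt, htn⟩, hft⟩ := ih (fun t h₁ h₂ => hf t h₁ (by omega)) hcn
      exact ⟨t, ⟨hmt, by omega⟩, hft⟩
    · have := hf n hmn (by omega)
      exact ⟨n + 1, ⟨by omega, le_rfl⟩, by omega⟩

section LatticePath

variable {p q : ℤ → ℤ × ℤ} {s e : ℤ}

lemma monotoneOn_of_isLatticeStep (hp : ∀ t, s ≤ t → t < e → IsLatticeStep (p t) (p (t + 1))) :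
    MonotoneOn p (Icc s e) :=
  monotoneOn_of_le_add_one ordConnected_Icc fun t _ hts hte => (hp t hts.1 (Int.lt_of_add_one_le hte.2)).le

lemma mapsTo_Icc_of_isLatticeStep {lo hi : ℤ × ℤ}
    (hp : ∀ t, s ≤ t → t < e → IsLatticeStep (p t) (p (t + 1)))
    (hs : lo ≤ p s) (he : p e ≤ hi) : MapsTo p (Icc s e) (Icc lo hi) :=
  (monotoneOn_of_isLatticeStep hp).mapsTo_Icc.mono_right (Icc_subset_Icc hs he)

lemma exists_meet_of_isLatticeStep (hse : s ≤ e)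
    (hp : ∀ t, s ≤ t → t < e → IsLatticeStep (p t) (p (t + 1)))
    (hq : ∀ t, s ≤ t → t < e → IsLatticeStep (q t) (q (t + 1)))
    (hsync : ∀ t ∈ Icc s e, (p t).1 + (p t).2 = (q t).1 + (q t).2)
    (hs : (p s).1 ≤ (q s).1) (he : (q e).1 ≤ (p e).1) :
    ∃ t ∈ Icc s e, p t = q t := by
  have hgap : ∀ t, s ≤ t → t < e →
      (p (t + 1)).1 - (q (t + 1)).1 ≤ (p t).1 - (q t).1 + 1 := fun t hst hte => by
    have := (hp t hst hte).fst_le_add_one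
    have := (hq t hst hte).le.1
    omega
  obtain ⟨t, ht, hx⟩ := Int.exists_eq_of_le_add_one_s10 (f := fun t => (p t).1 - (q t).1) (c := 0)
    hse hgap (by simpa using hs) (by simpa using he)
  have := hsync t ht
  exact ⟨t, ht, Prod.ext (by omega) (by omega)⟩

end LatticePath

theorem crossing_paths_meet_inside_rectangle_general
    (a b : ℤ)
    (s1 e1 s2 e2 : ℤ) (p1 p2 : ℤ → ℤ × ℤ)
    (hs1 : s1 ≤ e1) (hs2 : s2 ≤ e2)
    (hstep1 : ∀ t, s1 ≤ t → t < e1 →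
      p1 (t + 1) = ((p1 t).1 + 1, (p1 t).2) ∨ p1 (t + 1) = ((p1 t).1, (p1 t).2 + 1))
    (hstep2 : ∀ t, s2 ≤ t → t < e2 →
      p2 (t + 1) = ((p2 t).1 + 1, (p2 t).2) ∨ p2 (t + 1) = ((p2 t).1, (p2 t).2 + 1))
    (hsync1 : ∀ t, s1 ≤ t → t ≤ e1 → (p1 t).1 + (p1 t).2 = t)
    (hsync2 : ∀ t, s2 ≤ t → t ≤ e2 → (p2 t).1 + (p2 t).2 = t)
    (hstart1 : (p1 s1).1 = 0 ∧ 0 ≤ (p1 s1).2 ∧ (p1 s1).2 ≤ b)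
    (hend1 : (p1 e1).1 = a ∧ 0 ≤ (p1 e1).2 ∧ (p1 e1).2 ≤ b)
    (hstart2 : (p2 s2).2 = 0 ∧ 0 ≤ (p2 s2).1 ∧ (p2 s2).1 ≤ a)
    (hend2 : (p2 e2).2 = b ∧ 0 ≤ (p2 e2).1 ∧ (p2 e2).1 ≤ a) :
    ∃ t, s1 ≤ t ∧ t ≤ e1 ∧ s2 ≤ t ∧ t ≤ e2 ∧ p1 t = p2 t ∧
      0 ≤ (p1 t).1 ∧ (p1 t).1 ≤ a ∧ 0 ≤ (p1 t).2 ∧ (p1 t).2 ≤ b := by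
  have hR1 : MapsTo p1 (Icc s1 e1) (Icc (0, 0) (a, b)) :=
    mapsTo_Icc_of_isLatticeStep hstep1 ⟨hstart1.1.ge, hstart1.2.1⟩ ⟨hend1.1.le, hend1.2.2⟩
  have hR2 : MapsTo p2 (Icc s2 e2) (Icc (0, 0) (a, b)) :=
    mapsTo_Icc_of_isLatticeStep hstep2 ⟨hstart2.2.1, hstart2.1.ge⟩ ⟨hend2.2.2, hend2.1.le⟩
  have hs1e2 : s1 ≤ e2 := by
    have := hsync1 s1 le_rfl hs1; have := hsync2 e2 hs2 le_rfl; omega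
  have hs2e1 : s2 ≤ e1 := by
    have := hsync1 e1 hs1 le_rfl; have := hsync2 s2 le_rfl hs2; omega
  have hentry : (p1 (max s1 s2)).1 ≤ (p2 (max s1 s2)).1 := by
    rcases max_cases s1 s2 with ⟨h, hle⟩ | ⟨h, hlt⟩ <;> rw [h]
    · exact hstart1.1.trans_le (hR2 ⟨hle, by omega⟩).1.1
    · have := (hR1 ⟨hlt.le, hs2e1⟩).1.2
      have := hsync1 s2 hlt.le hs2e1
      have := hsync2 s2 le_rfl hs2
      omega
  have hexit : (p2 (min e1 e2)).1 ≤ (p1 (min e1 e2)).1 := by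
    rcases min_cases e1 e2 with ⟨h, hle⟩ | ⟨h, hlt⟩ <;> rw [h]
    · exact (hR2 ⟨by omega, hle⟩).2.1.trans hend1.1.ge
    · have := (hR1 ⟨hs1e2, hlt.le⟩).2.2
      have := hsync1 e2 hs1e2 hlt.le
      have := hsync2 e2 hs2 le_rfl
      omega
  obtain ⟨t, ⟨hst, hte⟩, hmeet⟩ := exists_meet_of_isLatticeStep (by omega)
    (fun t h₁ h₂ => hstep1 t (by omega) (by omega)) (fun t h₁ h₂ => hstep2 t (by omega) (by omega))
    (fun t ⟨h₁, h₂⟩ => by rw [hsync1 t (by omega) (by omega), hsync2 t (by omega) (by omega)])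
    hentry hexit
  have hin1 := hR1 ⟨le_of_max_le_left hst, le_of_le_min_left hte⟩
  exact ⟨t, by omega, by omega, by omega, by omega, hmeet, hin1.1.1, hin1.2.1, hin1.1.2, hin1.2.2⟩

/-- Two synchronized monotone lattice paths, one crossing the rectangle `[0,a] × [0,b]`
from its left border to its right border and the other from its bottom border to its top
border, meet at a common cell at a common timestep, and the meeting cell lies inside the
rectangle `[0,a] × [0,b]`. -/
theorem crossing_paths_meet_inside_rectangle
    (a b : ℤ) (ha : 0 ≤ a) (hb : 0 ≤ b)
    (s1 e1 s2 e2 : ℤ) (p1 p2 : ℤ → ℤ × ℤ)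
    (hs1 : s1 ≤ e1) (hs2 : s2 ≤ e2)
    (hstep1 : ∀ t, s1 ≤ t → t < e1 →
      p1 (t + 1) = ((p1 t).1 + 1, (p1 t).2) ∨ p1 (t + 1) = ((p1 t).1, (p1 t).2 + 1))
    (hstep2 : ∀ t, s2 ≤ t → t < e2 →
      p2 (t + 1) = ((p2 t).1 + 1, (p2 t).2) ∨ p2 (t + 1) = ((p2 t).1, (p2 t).2 + 1))
    (hsync1 : ∀ t, s1 ≤ t → t ≤ e1 → (p1 t).1 + (p1 t).2 = t)
    (hsync2 : ∀ t, s2 ≤ t → t ≤ e2 → (p2 t).1 + (p2 t).2 = t)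
    (hstart1 : (p1 s1).1 = 0 ∧ 0 ≤ (p1 s1).2 ∧ (p1 s1).2 ≤ b)
    (hend1 : (p1 e1).1 = a ∧ 0 ≤ (p1 e1).2 ∧ (p1 e1).2 ≤ b)
    (hstart2 : (p2 s2).2 = 0 ∧ 0 ≤ (p2 s2).1 ∧ (p2 s2).1 ≤ a)
    (hend2 : (p2 e2).2 = b ∧ 0 ≤ (p2 e2).1 ∧ (p2 e2).1 ≤ a) :
    ∃ t, s1 ≤ t ∧ t ≤ e1 ∧ s2 ≤ t ∧ t ≤ e2 ∧ p1 t = p2 t ∧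
      0 ≤ (p1 t).1 ∧ (p1 t).1 ≤ a ∧ 0 ≤ (p1 t).2 ∧ (p1 t).2 ≤ b :=
  crossing_paths_meet_inside_rectangle_general a b s1 e1 s2 e2 p1 p2 hs1 hs2 hstep1 hstep2 hsync1
    hsync2 hstart1 hend1 hstart2 hend2
end

section
/- Under the rectangle conflict conditions, the barrier constraint B(a_i, R_i, R_g) blocks all Manhattan-optimal paths of agent a_i from S_i to G_i: every path of length equal to the Manhattan distance from S_i to G_i visits some node on the exit border R_iR_g at its prescribed timestep. -/
def manhattan (a b : ℤ × ℤ) : ℤ := |a.1 - b.1| + |a.2 - b.2|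

lemma manhattan_self (a : ℤ × ℤ) : manhattan a a = 0 := by
  simp [manhattan]

lemma manhattan_triangle (a b c : ℤ × ℤ) : manhattan a c ≤ manhattan a b + manhattan b c := by
  unfold manhattan
  linarith [abs_sub_le a.1 b.1 c.1, abs_sub_le a.2 b.2 c.2]

lemma manhattan_le_one_of_gridStep {a b : ℤ × ℤ} (h : GridStep a b) : manhattan a b ≤ 1 := by
  rwa [manhattan, abs_sub_comm a.1, abs_sub_comm a.2]

lemma min_le_snd_and_snd_le_max_of_manhattan_add_eq {a b c : ℤ × ℤ}
    (h : manhattan a b + manhattan b c = manhattan a c) :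
    min a.2 c.2 ≤ b.2 ∧ b.2 ≤ max a.2 c.2 := by
  unfold manhattan at h
  have hfst := abs_sub_le a.1 b.1 c.1
  have hsnd := abs_sub_le a.2 b.2 c.2
  constructor <;> cases abs_cases (a.2 - b.2) <;> cases abs_cases (b.2 - c.2) <;>
    cases abs_cases (a.2 - c.2) <;> omega

theorem exists_eq_of_abs_sub_le_one {L : ℕ} {x : ℕ → ℤ} {c : ℤ}
    (hx : ∀ t < L, |x (t + 1) - x t| ≤ 1)
    (hc₁ : min (x 0) (x L) ≤ c) (hc₂ : c ≤ max (x 0) (x L)) :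
    ∃ t ≤ L, x t = c := by
  induction L with
  | zero => exact ⟨0, le_rfl, by omega⟩
  | succ n ih =>
    have hn := abs_le.mp (hx n n.lt_succ_self)
    by_cases hc : c = x (n + 1)
    · exact ⟨n + 1, le_rfl, hc.symm⟩
    · obtain ⟨t, ht, hxt⟩ := ih (fun t ht => hx t (ht.trans n.lt_succ_self)) (by omega) (by omega)
      exact ⟨t, ht.trans n.le_succ, hxt⟩

section GridPath

variable {L : ℕ} {p : ℕ → ℤ × ℤ}

lemma manhattan_le_of_gridStep (hstep : ∀ t < L, GridStep (p t) (p (t + 1)))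
    {i j : ℕ} (hij : i ≤ j) (hj : j ≤ L) : manhattan (p i) (p j) ≤ j - i := by
  induction j, hij using Nat.le_induction with
  | base => simp [manhattan_self]
  | succ j hij ih =>
    have := manhattan_triangle (p i) (p j) (p (j + 1))
    push_cast
    linarith [ih (by omega), manhattan_le_one_of_gridStep (hstep j hj)]

theorem manhattan_eq_of_length_eq_manhattan (hstep : ∀ t < L, GridStep (p t) (p (t + 1)))
    (hopt : (L : ℤ) = manhattan (p 0) (p L)) {t : ℕ} (ht : t ≤ L) :
    manhattan (p 0) (p t) = t ∧ manhattan (p t) (p L) = L - t := by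
  have h₁ := manhattan_le_of_gridStep hstep (Nat.zero_le t) ht
  have h₂ := manhattan_le_of_gridStep hstep ht le_rfl
  have h₃ := manhattan_triangle (p 0) (p t) (p L)
  push_cast at h₁ h₂
  constructor <;> linarith

end GridPath

theorem barrier_blocks_all_manhattan_optimal_paths_general
    (S G : ℤ × ℤ) (xb y1 y2 tS : ℤ)
    (hx1 : min S.1 G.1 ≤ xb) (hx2 : xb ≤ max S.1 G.1)
    (hspan1 : y1 ≤ min S.2 G.2) (hspan2 : max S.2 G.2 ≤ y2)
    (L : ℕ) (p : ℕ → ℤ × ℤ)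
    (hS : p 0 = S) (hG : p L = G)
    (hstep : ∀ t < L, GridStep (p t) (p (t + 1)))
    (hopt : (L : ℤ) = |S.1 - G.1| + |S.2 - G.2|) :
    ∃ t ≤ L, (p t).1 = xb ∧ y1 ≤ (p t).2 ∧ (p t).2 ≤ y2 ∧
      tS + (t : ℤ) = tS + |xb - S.1| + |(p t).2 - S.2| := by
  have hfst : ∀ t < L, |(p (t + 1)).1 - (p t).1| ≤ 1 := fun t ht =>
    (le_add_of_nonneg_right (abs_nonneg _)).trans (hstep t ht)
  obtain ⟨t, htL, hxt⟩ := exists_eq_of_abs_sub_le_one (x := fun t => (p t).1) hfst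
    (by simpa [hS, hG] using hx1) (by simpa [hS, hG] using hx2)
  obtain ⟨hSt, htG⟩ :=
    manhattan_eq_of_length_eq_manhattan hstep (by rw [hS, hG]; exact hopt) htL
  have hbetween := min_le_snd_and_snd_le_max_of_manhattan_add_eq (a := p 0) (c := p L)
    (by rw [hSt, htG, hS, hG, manhattan, ← hopt]; ring)
  rw [hS, hG] at hbetween
  rw [hS] at hSt
  refine ⟨t, htL, hxt, by omega, by omega, ?_⟩
  rw [← hSt, manhattan, ← hxt, abs_sub_comm S.1, abs_sub_comm S.2]
  ring

/-- Under the rectangle-conflict conditions, the barrier constraint on the exit border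
blocks all Manhattan-optimal paths of the agent: every path from `S` to `G` of length
equal to the Manhattan distance visits some node of the exit border
`{(xb, y) : y1 ≤ y ≤ y2}` at its prescribed timestep (the Manhattan distance from `S`,
offset by the start time `tS`).  The exit border lies between `S` and `G` (the rectangle
is contained in the `S`-`G` rectangle) and spans the side of the rectangle opposite to
`S`, with `G` weakly beyond it. -/
theorem barrier_blocks_all_manhattan_optimal_paths
    (S G : ℤ × ℤ) (xb y1 y2 tS : ℤ)
    (hy : y1 ≤ y2)
    (hx1 : min S.1 G.1 ≤ xb) (hx2 : xb ≤ max S.1 G.1)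
    (hspan1 : y1 ≤ min S.2 G.2) (hspan2 : max S.2 G.2 ≤ y2)
    (L : ℕ) (p : ℕ → ℤ × ℤ)
    (hS : p 0 = S) (hG : p L = G)
    (hstep : ∀ t < L, GridStep (p t) (p (t + 1)))
    (hopt : (L : ℤ) = |S.1 - G.1| + |S.2 - G.2|) :
    ∃ t ≤ L, (p t).1 = xb ∧ y1 ≤ (p t).2 ∧ (p t).2 ≤ y2 ∧
      tS + (t : ℤ) = tS + |xb - S.1| + |(p t).2 - S.2| :=
  barrier_blocks_all_manhattan_optimal_paths_general S G xb y1 y2 tS hx1 hx2 hspan1 hspan2 L p hS hG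
    hstep hopt
end
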